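/- arXiv:1312.3421 — 2 statements merged into one kernel-verified Lean document; each statement's English description precedes it below -/
import Mathlib

section
/- Let G be a group with abelianization isomorphic to ℤ², whose commutator subgroup is simple, and which is not virtually abelian. Then every finite-index subgroup N of G has abelianization isomorphic to ℤ² (in particular, N/[N,N] is free abelian of rank 2). -/
/-!
A normal subgroup `K` of `G` meets the simple group `[G,G]` either trivially, in which case
`[K,K] ≤ K ∩ [G,G] = 1` and `K` is abelian, or in all of `[G,G]`. Applied to the normal core
of a finite-index subgroup `N` (which is not abelian) this gives `[G,G] ≤ N`; so `N` is normal,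
and applied to `[N,N] ≤ [G,G]` it gives `[N,N] = [G,G]`. Hence `N/[N,N]` is the image of `N` in
`G/[G,G] ≅ ℤ²`, a finite-index subgroup of `ℤ²`, which is again free of rank two.
-/

namespace AddSubgroup

lemma nonempty_addEquiv_of_finiteIndex {M : Type*} [AddCommGroup M] [Module.Free ℤ M]
    [Module.Finite ℤ M] (A : AddSubgroup M) [A.FiniteIndex] : Nonempty (A ≃+ M) :=
  have : Module.finrank ℤ A.toIntSubmodule = Module.finrank ℤ M := finrank_eq_of_finiteIndex A
  (FiniteDimensional.nonempty_linearEquiv_of_finrank_eq this).map (·.toAddEquiv)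

end AddSubgroup

namespace Subgroup

lemma nonempty_mulEquiv_of_finiteIndex {M : Type*} [AddCommGroup M] [Module.Free ℤ M]
    [Module.Finite ℤ M] (H : Subgroup (Multiplicative M)) [H.FiniteIndex] :
    Nonempty (H ≃* Multiplicative M) := by
  have : (toAddSubgroup' H).FiniteIndex := ⟨(FiniteIndex.index_ne_zero : H.index ≠ 0)⟩
  obtain ⟨e⟩ := (toAddSubgroup' H).nonempty_addEquiv_of_finiteIndex
  let e' : H ≃* Multiplicative (toAddSubgroup' H) :=
    { toFun := fun h => .ofAdd ⟨h.1.toAdd, h.2⟩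
      invFun := fun a => ⟨.ofAdd a.toAdd.1, a.toAdd.2⟩
      left_inv := fun _ => rfl
      right_inv := fun _ => rfl
      map_mul' := fun _ _ => rfl }
  exact ⟨e'.trans e.toMultiplicative⟩

variable {G : Type*} [Group G]

lemma eq_bot_or_eq_of_normal_of_le {H K : Subgroup G} [IsSimpleGroup H] [K.Normal]
    (hKH : K ≤ H) : K = ⊥ ∨ K = H := by
  refine (IsSimpleGroup.eq_bot_or_eq_top_of_normal _ (Normal.subgroupOf ‹_› H)).imp
    (fun h => ?_) (fun h => le_antisymm hKH (subgroupOf_eq_top.mp h))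
  exact (subgroupOf_eq_bot.mp h).eq_bot_of_le hKH

end Subgroup

section SimpleCommutator

open Subgroup

variable {G : Type*} [Group G] [IsSimpleGroup (commutator G)]

lemma commutator_le_of_normal_of_not_isMulCommutative {K : Subgroup G} [K.Normal]
    (hK : ¬IsMulCommutative K) : commutator G ≤ K := by
  rcases eq_bot_or_eq_of_normal_of_le (inf_le_right : K ⊓ commutator G ≤ commutator G) with h | h
  · refine absurd (commutator_self_eq_bot_iff.mp (eq_bot_iff.mpr ?_)) hK
    exact h ▸ le_inf (commutator_le_self K) (commutator_mono le_top le_top)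
  · exact h ▸ inf_le_left

lemma commutator_le_of_finiteIndex
    (hG : ∀ H : Subgroup G, H.FiniteIndex → ¬IsMulCommutative H)
    (N : Subgroup G) [N.FiniteIndex] : commutator G ≤ N :=
  (commutator_le_of_normal_of_not_isMulCommutative (hG _ inferInstance)).trans N.normalCore_le

lemma commutator_self_eq_commutator {N : Subgroup G} (hN : commutator G ≤ N)
    (hNc : ¬IsMulCommutative N) : ⁅N, N⁆ = commutator G := by
  have := Normal.of_commutator_le (G := G) hN
  have hNN : ⁅N, N⁆ ≤ commutator G := commutator_mono le_top le_top
  exact (eq_bot_or_eq_of_normal_of_le hNN).resolve_left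
    fun h => hNc (commutator_self_eq_bot_iff.mp h)

end SimpleCommutator

namespace Abelianization

variable {G Q : Type*} [Group G] [Group Q]

noncomputable def mulEquivMapOfKerEq {N : Subgroup G} (π : G →* Q) (h : π.ker = ⁅N, N⁆) :
    Abelianization N ≃* N.map π :=
  have hker : (π.comp N.subtype).ker = commutator N := by
    rw [← MonoidHom.comap_ker, h, ← N.map_subtype_commutator,
      Subgroup.comap_map_eq_self_of_injective N.subtype_injective]
  (QuotientGroup.quotientMulEquivOfEq hker.symm).trans <|
    (QuotientGroup.quotientKerEquivRange _).trans <|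
      MulEquiv.subgroupCongr (by rw [MonoidHom.range_comp, N.range_subtype])

end Abelianization

/-- If `G` has abelianization `ℤ²`, simple commutator subgroup, and is not virtually
abelian, then every finite-index subgroup of `G` has abelianization `ℤ²`. -/
theorem abelianization_of_finiteIndex_subgroup {G : Type*} [Group G]
    (hab : Nonempty (Abelianization G ≃* Multiplicative (ℤ × ℤ)))
    (hsimple : IsSimpleGroup (commutator G))
    (hnva : ¬ ∃ H : Subgroup G, H.FiniteIndex ∧ IsMulCommutative H) :
    ∀ N : Subgroup G, N.FiniteIndex →
      Nonempty (Abelianization N ≃* Multiplicative (ℤ × ℤ)) := by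
  intro N hN
  obtain ⟨φ⟩ := hab
  have hG (H : Subgroup G) (hH : H.FiniteIndex) : ¬IsMulCommutative H :=
    fun hc => hnva ⟨H, hH, hc⟩
  have hle : commutator G ≤ N := commutator_le_of_finiteIndex hG N
  have hNN : ⁅N, N⁆ = commutator G := commutator_self_eq_commutator hle (hG N hN)
  let π : G →* Multiplicative (ℤ × ℤ) := (φ : Abelianization G →* _).comp Abelianization.of
  have hπ_ker : π.ker = commutator G := by
    rw [MonoidHom.ker_mulEquiv_comp, Abelianization.ker_of]
  have hπ_surj : Function.Surjective π := φ.surjective.comp QuotientGroup.mk_surjective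
  have : (N.map π).FiniteIndex :=
    ⟨Subgroup.index_map_eq N hπ_surj (hπ_ker ▸ hle) ▸ hN.index_ne_zero⟩
  obtain ⟨ψ⟩ := (N.map π).nonempty_mulEquiv_of_finiteIndex
  exact ⟨(Abelianization.mulEquivMapOfKerEq π (hπ_ker.trans hNN.symm)).trans ψ⟩
end

section
/- The group defined by the infinite presentation ⟨x₀, x₁, x₂, ... | xₙxᵢ = xᵢxₙ₊₁ for all 0 ≤ i < n⟩ is isomorphic to the group with finite presentation ⟨x₀, x₁ | [x₀x₁⁻¹, x₀⁻¹x₁x₀] = 1, [x₀x₁⁻¹, x₀⁻²x₁x₀²] = 1⟩, via the identification xₙ = x₀^{1-n} x₁ x₀^{n-1} for n ≥ 2. -/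
namespace ThompsonAux
/-- The free generator `x₀`. -/
def a : FreeGroup (Fin 2) := FreeGroup.of 0
/-- The free generator `x₁`. -/
def b : FreeGroup (Fin 2) := FreeGroup.of 1
end ThompsonAux

open scoped commutatorElement in
/-- Relators `[x₀x₁⁻¹, x₀⁻¹x₁x₀]` and `[x₀x₁⁻¹, x₀⁻²x₁x₀²]` of the standard finite
presentation of Thompson's group `F`. -/
def thompsonRels : Set (FreeGroup (Fin 2)) :=
  { ⁅ThompsonAux.a * ThompsonAux.b⁻¹, ThompsonAux.a⁻¹ * ThompsonAux.b * ThompsonAux.a⁆,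
    ⁅ThompsonAux.a * ThompsonAux.b⁻¹, ThompsonAux.a⁻¹ ^ 2 * ThompsonAux.b * ThompsonAux.a ^ 2⁆ }

/-- Thompson's group `F`, via its standard finite presentation. -/
def ThompsonF := PresentedGroup thompsonRels

instance : Group ThompsonF := by unfold ThompsonF; infer_instance

/-- The generators `x₀, x₁` of Thompson's group `F`. -/
def ThompsonF.x (i : Fin 2) : ThompsonF := PresentedGroup.of i

/-- Relators `xₙxᵢ(xᵢxₙ₊₁)⁻¹` for `0 ≤ i < n` of the infinite presentation of
Thompson's group `F`. -/
def thompsonInfRels : Set (FreeGroup ℕ) :=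
  { r | ∃ n i : ℕ, i < n ∧
      r = FreeGroup.of n * FreeGroup.of i * (FreeGroup.of i * FreeGroup.of (n + 1))⁻¹ }

/-- Thompson's group `F`, via its infinite presentation
`⟨x₀, x₁, … | xₙxᵢ = xᵢxₙ₊₁ for 0 ≤ i < n⟩`. -/
def ThompsonInf := PresentedGroup thompsonInfRels

instance : Group ThompsonInf := by unfold ThompsonInf; infer_instance

/-- The generators `xᵢ` of the infinitely presented Thompson's group. -/
def ThompsonInf.x (i : ℕ) : ThompsonInf := PresentedGroup.of i

/-!
The relations with `i = 0` say `xₙ₊₁ = x₀⁻¹ xₙ x₀`, so every generator of the infinite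
presentation is `x₀^{1-n} x₁ x₀^{n-1}`, and conjugation by `x₀` shifts every relation
`(i, n)` with `i ≥ 1` to `(i + 1, n + 1)`. Hence all relations follow from those with `i = 0`
and `i = 1`, and the latter say exactly that `x₀x₁⁻¹` commutes with `xₙ` for `n ≥ 2`.
Commuting with `x₂` and `x₃` is enough: if `x₀x₁⁻¹` commutes with `xₙ₊₂`, then
`xₙ₊₄ = x₂⁻¹ xₙ₊₃ x₂`, so the commutation propagates to all `n`.
-/

theorem PresentedGroup.lift_of_eq_one_of_mem {α : Type*} {rels : Set (FreeGroup α)}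
    {r : FreeGroup α} (hr : r ∈ rels) : FreeGroup.lift (PresentedGroup.of (rels := rels)) r = 1 :=
  (FreeGroup.lift_unique (PresentedGroup.mk rels) fun _ => rfl).symm.trans
    (PresentedGroup.one_of_mem hr)

section

variable {G : Type*} [Group G]

def ThompsonRelations (x : ℕ → G) : Prop :=
  ∀ ⦃i n : ℕ⦄, i < n → x n * x i = x i * x (n + 1)

def thompsonSeq (A B : G) : ℕ → G
  | 0 => A
  | 1 => B
  | n + 2 => A⁻¹ * thompsonSeq A B (n + 1) * A

theorem forall_lift_thompsonInfRels_eq_one_iff {x : ℕ → G} :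
    (∀ r ∈ thompsonInfRels, FreeGroup.lift x r = 1) ↔ ThompsonRelations x := by
  have lift_rel (n i : ℕ) : FreeGroup.lift x
      (FreeGroup.of n * FreeGroup.of i * (FreeGroup.of i * FreeGroup.of (n + 1))⁻¹) = 1 ↔
        x n * x i = x i * x (n + 1) := by
    simp only [map_mul, map_inv, FreeGroup.lift_apply_of, mul_inv_eq_one]
  constructor
  · exact fun h i n hin => (lift_rel n i).mp (h _ ⟨n, i, hin, rfl⟩)
  · rintro hx r ⟨n, i, hin, rfl⟩
    exact (lift_rel n i).mpr (hx hin)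

theorem forall_lift_thompsonRels_eq_one_iff {f : Fin 2 → G} :
    (∀ r ∈ thompsonRels, FreeGroup.lift f r = 1) ↔
      Commute (f 0 * (f 1)⁻¹) ((f 0)⁻¹ * f 1 * f 0) ∧
        Commute (f 0 * (f 1)⁻¹) ((f 0)⁻¹ ^ 2 * f 1 * f 0 ^ 2) := by
  simp [thompsonRels, ThompsonAux.a, ThompsonAux.b, map_commutatorElement,
    commutatorElement_eq_one_iff_commute]

theorem thompsonSeq_eq_zpow (A B : G) {n : ℕ} (hn : 1 ≤ n) :
    thompsonSeq A B n = A ^ (1 - (n : ℤ)) * B * A ^ ((n : ℤ) - 1) := by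
  induction n, hn using Nat.le_induction with
  | base => simp [thompsonSeq]
  | succ n hn ih =>
    obtain ⟨m, rfl⟩ := Nat.exists_eq_add_of_le' hn
    rw [thompsonSeq, ih]
    push_cast
    group

theorem thompsonSeq_three (A B : G) : thompsonSeq A B 3 = A⁻¹ ^ 2 * B * A ^ 2 := by
  simp only [thompsonSeq, pow_two]
  group

theorem map_thompsonSeq {H : Type*} [Group H] (f : G →* H) (A B : G) (n : ℕ) :
    f (thompsonSeq A B n) = thompsonSeq (f A) (f B) n := by
  induction n with
  | zero => rfl
  | succ n ih =>
    rcases n with _ | n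
    · rfl
    · simp only [thompsonSeq, map_mul, map_inv, ih]

theorem ThompsonRelations.of_conj {x : ℕ → G}
    (h₀ : ∀ n, x (n + 2) = (x 0)⁻¹ * x (n + 1) * x 0)
    (h₁ : ∀ n, x (n + 3) = (x 1)⁻¹ * x (n + 2) * x 1) : ThompsonRelations x := by
  have rel_succ : ∀ j m, j < m → x (m + 1) * x (j + 1) = x (j + 1) * x (m + 2) := by
    intro j
    induction j with
    | zero =>
      rintro m hm
      obtain ⟨k, rfl⟩ : ∃ k, m = k + 1 := ⟨m - 1, by omega⟩
      rw [h₁]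
      group
    | succ j ih =>
      rintro m hm
      obtain ⟨k, rfl⟩ : ∃ k, m = k + 1 := ⟨m - 1, by omega⟩
      calc x (k + 2) * x (j + 2) = (x 0)⁻¹ * (x (k + 1) * x (j + 1)) * x 0 := by
            rw [h₀, h₀]; group
        _ = (x 0)⁻¹ * (x (j + 1) * x (k + 2)) * x 0 := by rw [ih k (by omega)]
        _ = x (j + 2) * x (k + 3) := by rw [h₀ j, h₀ (k + 1)]; group
  rintro (_ | j) n hn
  · obtain ⟨k, rfl⟩ : ∃ k, n = k + 1 := ⟨n - 1, by omega⟩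
    rw [h₀]
    group
  · obtain ⟨m, rfl⟩ : ∃ m, n = m + 1 := ⟨n - 1, by omega⟩
    exact rel_succ j m (by omega)

namespace ThompsonRelations

variable {x : ℕ → G} (hx : ThompsonRelations x)
include hx

theorem conj_eq {i n : ℕ} (h : i < n) : (x i)⁻¹ * x n * x i = x (n + 1) := by
  rw [mul_assoc, hx h, inv_mul_cancel_left]

theorem eq_thompsonSeq : x = thompsonSeq (x 0) (x 1) := by
  funext n
  induction n with
  | zero => rfl
  | succ n ih =>
    rcases n with _ | n
    · rfl
    · rw [thompsonSeq, ← ih, hx.conj_eq n.succ_pos]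

theorem commute_mul_inv {n : ℕ} (hn : 2 ≤ n) : Commute (x 0 * (x 1)⁻¹) (x n) := by
  rw [Commute, SemiconjBy, ← mul_inv_eq_iff_eq_mul]
  calc x 0 * (x 1)⁻¹ * x n * (x 0 * (x 1)⁻¹)⁻¹
      = x 0 * ((x 1)⁻¹ * x n * x 1) * (x 0)⁻¹ := by group
    _ = x n := by
      rw [hx.conj_eq hn, ← hx.conj_eq (by omega : 0 < n)]
      group

theorem commute_relators :
    Commute (x 0 * (x 1)⁻¹) ((x 0)⁻¹ * x 1 * x 0) ∧
      Commute (x 0 * (x 1)⁻¹) ((x 0)⁻¹ ^ 2 * x 1 * x 0 ^ 2) :=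
  ⟨hx.conj_eq zero_lt_one ▸ hx.commute_mul_inv le_rfl,
    (congrFun hx.eq_thompsonSeq 3).trans (thompsonSeq_three _ _) ▸
      hx.commute_mul_inv (by norm_num)⟩

end ThompsonRelations

section

variable {A B : G}

theorem thompsonSeq_add_three_eq_of_commute {n : ℕ}
    (h : Commute (A * B⁻¹) (thompsonSeq A B (n + 2))) :
    thompsonSeq A B (n + 3) = B⁻¹ * thompsonSeq A B (n + 2) * B := by
  set s := thompsonSeq A B (n + 2)
  calc thompsonSeq A B (n + 3) = A⁻¹ * (A * B⁻¹ * s * (A * B⁻¹)⁻¹) * A := by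
        rw [h.eq, mul_inv_cancel_right]; rfl
    _ = B⁻¹ * s * B := by group

theorem commute_thompsonSeq
    (h₂ : Commute (A * B⁻¹) (A⁻¹ * B * A)) (h₃ : Commute (A * B⁻¹) (A⁻¹ ^ 2 * B * A ^ 2))
    (n : ℕ) : Commute (A * B⁻¹) (thompsonSeq A B (n + 2)) := by
  have h₃' : Commute (A * B⁻¹) (thompsonSeq A B 3) := thompsonSeq_three A B ▸ h₃
  suffices ∀ n, Commute (A * B⁻¹) (thompsonSeq A B (n + 2)) ∧
      Commute (A * B⁻¹) (thompsonSeq A B (n + 3)) from (this n).1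
  intro n
  induction n with
  | zero => exact ⟨h₂, h₃'⟩
  | succ n ih =>
    refine ⟨ih.2, ?_⟩
    have h : thompsonSeq A B (n + 4) =
        (A⁻¹ * B * A)⁻¹ * thompsonSeq A B (n + 3) * (A⁻¹ * B * A) :=
      calc thompsonSeq A B (n + 4) = A⁻¹ * (B⁻¹ * thompsonSeq A B (n + 2) * B) * A := by
            rw [← thompsonSeq_add_three_eq_of_commute ih.1]; rfl
        _ = (A⁻¹ * B * A)⁻¹ * (A⁻¹ * thompsonSeq A B (n + 2) * A) * (A⁻¹ * B * A) := by
            group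
        _ = _ := rfl
    rw [h]
    exact (h₂.inv_right.mul_right ih.2).mul_right h₂

theorem thompsonRelations_thompsonSeq
    (h₂ : Commute (A * B⁻¹) (A⁻¹ * B * A)) (h₃ : Commute (A * B⁻¹) (A⁻¹ ^ 2 * B * A ^ 2)) :
    ThompsonRelations (thompsonSeq A B) :=
  .of_conj (fun _ => rfl) fun n =>
    thompsonSeq_add_three_eq_of_commute (commute_thompsonSeq h₂ h₃ n)

end

end

theorem ThompsonInf.thompsonRelations : ThompsonRelations ThompsonInf.x :=
  forall_lift_thompsonInfRels_eq_one_iff.mp fun _ => PresentedGroup.lift_of_eq_one_of_mem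

theorem ThompsonF.commute_relators :
    Commute (x 0 * (x 1)⁻¹) ((x 0)⁻¹ * x 1 * x 0) ∧
      Commute (x 0 * (x 1)⁻¹) ((x 0)⁻¹ ^ 2 * x 1 * x 0 ^ 2) :=
  forall_lift_thompsonRels_eq_one_iff.mp fun _ => PresentedGroup.lift_of_eq_one_of_mem

def ThompsonInf.toThompsonF : ThompsonInf →* ThompsonF :=
  PresentedGroup.toGroup <| forall_lift_thompsonInfRels_eq_one_iff.mpr <|
    thompsonRelations_thompsonSeq ThompsonF.commute_relators.1 ThompsonF.commute_relators.2

def ThompsonF.toThompsonInf : ThompsonF →* ThompsonInf :=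
  PresentedGroup.toGroup (f := fun i : Fin 2 => ThompsonInf.x i) <|
    forall_lift_thompsonRels_eq_one_iff.mpr ThompsonInf.thompsonRelations.commute_relators

theorem ThompsonInf.toThompsonF_x (n : ℕ) :
    toThompsonF (x n) = thompsonSeq (ThompsonF.x 0) (ThompsonF.x 1) n :=
  PresentedGroup.toGroup.of _

theorem ThompsonF.toThompsonInf_x (i : Fin 2) : toThompsonInf (x i) = ThompsonInf.x i :=
  PresentedGroup.toGroup.of _

theorem ThompsonF.toThompsonInf_comp_toThompsonF :
    toThompsonInf.comp ThompsonInf.toThompsonF = MonoidHom.id ThompsonInf :=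
  PresentedGroup.ext fun n => by
    show toThompsonInf (ThompsonInf.toThompsonF (ThompsonInf.x n)) = ThompsonInf.x n
    rw [ThompsonInf.toThompsonF_x, map_thompsonSeq, toThompsonInf_x, toThompsonInf_x]
    exact (congrFun ThompsonInf.thompsonRelations.eq_thompsonSeq n).symm

theorem ThompsonInf.toThompsonF_comp_toThompsonInf :
    toThompsonF.comp ThompsonF.toThompsonInf = MonoidHom.id ThompsonF :=
  PresentedGroup.ext fun i => by
    show toThompsonF (ThompsonF.toThompsonInf (ThompsonF.x i)) = ThompsonF.x i
    rw [ThompsonF.toThompsonInf_x, toThompsonF_x]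
    fin_cases i <;> rfl

def ThompsonInf.equivThompsonF : ThompsonInf ≃* ThompsonF :=
  toThompsonF.toMulEquiv ThompsonF.toThompsonInf ThompsonF.toThompsonInf_comp_toThompsonF
    toThompsonF_comp_toThompsonInf

/-- The infinitely presented group `⟨x₀, x₁, … | xₙxᵢ = xᵢxₙ₊₁ for 0 ≤ i < n⟩` is
isomorphic to the finitely presented Thompson's group `F`, via `x₀ ↦ x₀`, `x₁ ↦ x₁`
and `xₙ ↦ x₀^{1-n} x₁ x₀^{n-1}` for `n ≥ 2`. -/
theorem thompsonInf_iso_thompsonF :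
    ∃ e : ThompsonInf ≃* ThompsonF,
      e (ThompsonInf.x 0) = ThompsonF.x 0 ∧
      e (ThompsonInf.x 1) = ThompsonF.x 1 ∧
      ∀ n : ℕ, 2 ≤ n →
        e (ThompsonInf.x n) =
          ThompsonF.x 0 ^ (1 - (n : ℤ)) * ThompsonF.x 1 * ThompsonF.x 0 ^ ((n : ℤ) - 1) := by
  refine ⟨ThompsonInf.equivThompsonF, ThompsonInf.toThompsonF_x 0, ThompsonInf.toThompsonF_x 1,
    fun n hn => ?_⟩
  exact (ThompsonInf.toThompsonF_x n).trans (thompsonSeq_eq_zpow _ _ (by omega))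
end
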